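/- arXiv:math/0109171 — 2 statements merged into one kernel-verified Lean document; each statement's English description precedes it below -/
import Mathlib

section
/- Let H : R^{2n} → R^{2n} be a locally Lipschitz vector field with H(-x) = -H(x) for all x. Let x : R → R^{2n} be a τ-periodic solution of ẋ = H(x) with minimal period τ > 0, and suppose there exist s₁, s₂ ∈ R with x(s₁) = -x(s₂). Then x(t + τ/2) = -x(t) for all t ∈ R. -/
/-!
Reflecting a solution through the origin and shifting it in time gives again a solution, because
`H` is odd. If `x s₁ = -x s₂`, uniqueness therefore shows that `x` is antiperiodic with
antiperiod `c = s₂ - s₁`. Then `2c` is a period, hence an integer multiple `kτ` of the minimal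
period. For even `k` the shift `c` is itself a period, forcing `x = -x`, i.e. `x = 0`; for odd `k`
the shift `c` differs from `τ / 2` by a period, so `τ / 2` is an antiperiod.
-/

open Set Filter Topology Function

theorem LocallyLipschitz.eq_of_hasDerivAt {E : Type*} [NormedAddCommGroup E] [NormedSpace ℝ E]
    {H : E → E} (hLip : LocallyLipschitz H) {x y : ℝ → E}
    (hx : ∀ t, HasDerivAt x (H (x t)) t) (hy : ∀ t, HasDerivAt y (H (y t)) t)
    {t₀ : ℝ} (h₀ : x t₀ = y t₀) : x = y := by
  have hclopen : IsClopen {t | x t = y t} := by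
    refine ⟨isClosed_eq (continuous_iff_continuousAt.2 fun t ↦ (hx t).continuousAt)
      (continuous_iff_continuousAt.2 fun t ↦ (hy t).continuousAt), ?_⟩
    refine isOpen_iff_mem_nhds.2 fun t₁ (ht₁ : x t₁ = y t₁) ↦ ?_
    obtain ⟨K, s, hs, hK⟩ := hLip (x t₁)
    have hxs : ∀ᶠ t in 𝓝 t₁, HasDerivAt x (H (x t)) t ∧ x t ∈ s :=
      eventually_of_mem ((hx t₁).continuousAt.preimage_mem_nhds hs) fun t ht ↦ ⟨hx t, ht⟩
    have hys : ∀ᶠ t in 𝓝 t₁, HasDerivAt y (H (y t)) t ∧ y t ∈ s :=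
      eventually_of_mem ((hy t₁).continuousAt.preimage_mem_nhds (ht₁ ▸ hs)) fun t ht ↦ ⟨hy t, ht⟩
    exact ODE_solution_unique_of_eventually (v := fun _ ↦ H) (s := fun _ ↦ s)
      (.of_forall fun _ ↦ hK) hxs hys ht₁
  funext t
  exact eq_univ_iff_forall.1 (hclopen.eq_univ ⟨t₀, h₀⟩) t

theorem antiperiodic_of_eq_neg {E : Type*} [NormedAddCommGroup E] [NormedSpace ℝ E]
    {H : E → E} (hLip : LocallyLipschitz H) (hodd : ∀ v, H (-v) = -H v) {x : ℝ → E}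
    (hx : ∀ t, HasDerivAt x (H (x t)) t) {s₁ s₂ : ℝ} (hmeet : x s₁ = -x s₂) :
    Antiperiodic x (s₂ - s₁) := by
  have hy : ∀ t, HasDerivAt (fun t ↦ -x (t + (s₂ - s₁))) (H (-x (t + (s₂ - s₁)))) t :=
    fun t ↦ by rw [hodd]; exact ((hx _).comp_add_const t _).neg
  have h₀ : x s₁ = -x (s₁ + (s₂ - s₁)) := by rwa [add_sub_cancel]
  intro t
  exact neg_eq_iff_eq_neg.1 (congrFun (hLip.eq_of_hasDerivAt hx hy h₀) t).symm

theorem Function.Periodic.exists_int_mul_eq_of_minimal {β : Type*} {f : ℝ → β} {τ : ℝ}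
    (hτ : 0 < τ) (hmin : ∀ T, 0 < T → Periodic f T → τ ≤ T) (hper : Periodic f τ)
    {T : ℝ} (hT : Periodic f T) : ∃ k : ℤ, T = k * τ := by
  set r := T - ⌊T / τ⌋ * τ
  have hr : Periodic f r := fun t ↦ by
    rw [show t + r = t + T - ⌊T / τ⌋ * τ by ring, hper.sub_int_mul_eq, hT t]
  obtain hr₀ | hr₀ := (Int.sub_floor_div_mul_nonneg T hτ).eq_or_lt
  · exact ⟨⌊T / τ⌋, by linarith⟩
  · exact absurd (hmin r hr₀ hr) (not_le.2 (Int.sub_floor_div_mul_lt T hτ))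

theorem Function.Antiperiodic.antiperiodic_half_of_minimal {β : Type*} [AddGroup β]
    [IsAddTorsionFree β] {f : ℝ → β} {c τ : ℝ} (hc : Antiperiodic f c) (hτ : 0 < τ)
    (hmin : ∀ T, 0 < T → Periodic f T → τ ≤ T) (hper : Periodic f τ) :
    Antiperiodic f (τ / 2) := by
  obtain ⟨k, hk⟩ := hper.exists_int_mul_eq_of_minimal hτ hmin hc.periodic_two_mul
  obtain ⟨m, rfl⟩ | ⟨m, rfl⟩ := k.even_or_odd
  · have hcm : c = m * τ := by push_cast at hk; linarith
    have hzero : ∀ t, f t = 0 := fun t ↦ self_eq_neg.1 <| by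
      rw [← hc t, hcm, hper.int_mul m t]
    intro t
    rw [hzero, hzero, neg_zero]
  · have hcm : c = m * τ + τ / 2 := by push_cast at hk; linarith
    intro t
    rw [← hper.int_mul m (t + τ / 2), show t + τ / 2 + m * τ = t + c by rw [hcm]; ring, hc t]

theorem antisymmetric_of_orbit_meets_neg_orbit {n : ℕ}
    (H : EuclideanSpace ℝ (Fin (2 * n)) → EuclideanSpace ℝ (Fin (2 * n)))
    (hLip : LocallyLipschitz H) (hodd : ∀ x, H (-x) = -H x)
    (x : ℝ → EuclideanSpace ℝ (Fin (2 * n)))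
    (hx : ∀ t, HasDerivAt x (H (x t)) t)
    (τ : ℝ) (hτ : 0 < τ) (hper : Function.Periodic x τ)
    (hmin : ∀ T, 0 < T → Function.Periodic x T → τ ≤ T)
    (s₁ s₂ : ℝ) (hmeet : x s₁ = -x s₂) :
    ∀ t, x (t + τ / 2) = -x t := by
  have := IsAddTorsionFree.of_isTorsionFree ℝ (EuclideanSpace ℝ (Fin (2 * n)))
  exact (antiperiodic_of_eq_neg hLip hodd hx hmeet).antiperiodic_half_of_minimal hτ hmin hper
end

section
/- Let q be a positive integer and for k = 1,…,q let (i_k^m)_{m∈N} be integer sequences such that the limits î_k = lim_{m→∞} i_k^m/m exist and are positive. Then there exist infinitely many positive integers N such that for each k there is m_k ∈ N with |2N − i_k^{2m_k}| ≤ C for a constant C independent of N, provided each sequence satisfies |i_k^{m+1} − i_k^m − î_k| ≤ C' uniformly. -/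
open Filter

theorem common_index_clustering (q : ℕ) (C' : ℝ)
    (i : Fin q → ℕ → ℤ) (ihat : Fin q → ℝ)
    (hpos : ∀ k, 0 < ihat k)
    (hlim : ∀ k, Tendsto (fun m : ℕ => (i k m : ℝ) / m) atTop (nhds (ihat k)))
    (hstep : ∀ k, ∀ m : ℕ, |(i k (m + 1) : ℝ) - (i k m : ℝ) - ihat k| ≤ C') :
    ∃ C : ℝ, ∀ N₀ : ℕ, ∃ N : ℕ, N₀ ≤ N ∧
      ∀ k, ∃ m : ℕ, 0 < m ∧ |2 * (N : ℝ) - (i k (2 * m) : ℝ)| ≤ C := by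
  obtain ⟨B, hB⟩ := Finite.exists_le ihat
  refine ⟨2 * B + 2 * |C'|, fun N₀ => ?_⟩
  obtain ⟨A, hA⟩ := Finite.exists_le fun k => i k 2
  set N : ℕ := max N₀ A.toNat with hN
  refine ⟨N, le_max_left _ _, fun k => ?_⟩
  have hN2 : i k 2 ≤ 2 * (N : ℤ) := by
    have h1 : i k 2 ≤ A := hA k
    have h2 : A ≤ (A.toNat : ℤ) := Int.self_le_toNat A
    have h3 : (A.toNat : ℤ) ≤ (N : ℤ) := by exact_mod_cast le_max_right N₀ A.toNat
    omega
  -- i k m → ∞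
  have htop : Tendsto (fun m : ℕ => (i k m : ℝ)) atTop atTop := by
    have h1 : Tendsto (fun m : ℕ => (i k m : ℝ) / m * m) atTop atTop :=
      Tendsto.pos_mul_atTop (hpos k) (hlim k) tendsto_natCast_atTop_atTop
    refine h1.congr' ?_
    filter_upwards [eventually_gt_atTop 0] with m hm
    field_simp
  have hex : ∃ n : ℕ, 2 * (N : ℤ) < i k (2 * (n + 1)) := by
    obtain ⟨a, ha⟩ := (htop.eventually_gt_atTop (2 * (N : ℝ))).exists_forall_of_atTop
    refine ⟨a, ?_⟩
    have := ha (2 * (a + 1)) (by omega)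
    exact_mod_cast this
  classical
  set m := Nat.find hex with hm
  have hspec : 2 * (N : ℤ) < i k (2 * (m + 1)) := Nat.find_spec hex
  have hmpos : 0 < m := by
    rcases Nat.eq_zero_or_pos m with h0 | h
    · exfalso
      rw [h0] at hspec
      norm_num at hspec
      omega
    · exact h
  have hle : i k (2 * m) ≤ 2 * (N : ℤ) := by
    have := Nat.find_min hex (show m - 1 < m by omega)
    push_neg at this
    have heq : m - 1 + 1 = m := by omega
    rwa [heq] at this
  refine ⟨m, hmpos, ?_⟩
  have a1 := abs_le.mp (hstep k (2 * m))
  have a2 := abs_le.mp (hstep k (2 * m + 1))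
  have hidx : 2 * (m + 1) = 2 * m + 1 + 1 := by ring
  rw [hidx] at hspec
  have hspec' : 2 * (N : ℝ) < ((i k (2 * m + 1 + 1) : ℤ) : ℝ) := by exact_mod_cast hspec
  have hle' : ((i k (2 * m) : ℤ) : ℝ) ≤ 2 * (N : ℝ) := by exact_mod_cast hle
  have hBk := hB k
  have hC' : C' ≤ |C'| := le_abs_self C'
  have hposk := hpos k
  rw [abs_le]
  constructor <;> linarith [a1.1, a1.2, a2.1, a2.2]
end
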